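/- arXiv:quant-ph/0002081 — 6 statements merged into one kernel-verified Lean document; each statement's English description precedes it below -/
import Mathlib

section
/- Let f : G → G be a causal homeomorphism of the Galilean space-time G = ℝ × ℝ³. Then for all u, w ∈ G, P_T(u) = P_T(w) implies P_T(f(u)) = P_T(f(w)); that is, f maps each constant-time hyperplane into a constant-time hyperplane. -/
open Filter Topology

/- Let `t` decrease to `w.1` with the spatial part of `w` fixed: every `f (t, w.2)` is strictly later
than `f u`, and by continuity these times converge to the time of `f w`, so `(f u).1 ≤ (f w).1`.
Exchanging `u` and `w` gives equality. -/

section TimeOrderPreserving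

variable {α β : Type*} [TopologicalSpace α] [TopologicalSpace β] {f : ℝ × α → ℝ × β}

theorem fst_apply_le_of_fst_eq (hcont : Continuous f)
    (hf : ∀ u w : ℝ × α, u.1 < w.1 → (f u).1 < (f w).1) {u w : ℝ × α} (h : u.1 = w.1) :
    (f u).1 ≤ (f w).1 := by
  have hlim : Tendsto (fun t : ℝ => (f (t, w.2)).1) (𝓝[>] w.1) (𝓝 (f w).1) :=
    ((continuous_fst.comp (hcont.comp (continuous_id.prodMk continuous_const))).tendsto
      w.1).mono_left nhdsWithin_le_nhds
  refine ge_of_tendsto hlim ?_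
  filter_upwards [self_mem_nhdsWithin] with t ht
  exact (hf u (t, w.2) (h.trans_lt ht)).le

theorem fst_apply_eq_of_fst_eq (hcont : Continuous f)
    (hf : ∀ u w : ℝ × α, u.1 < w.1 → (f u).1 < (f w).1) {u w : ℝ × α} (h : u.1 = w.1) :
    (f u).1 = (f w).1 :=
  (fst_apply_le_of_fst_eq hcont hf h).antisymm (fst_apply_le_of_fst_eq hcont hf h.symm)

end TimeOrderPreserving

/-- Let `f` be a causal homeomorphism of the Galilean space-time
`G = ℝ × ℝ³` (i.e. `P_T(u) < P_T(w)` implies `P_T(f(u)) < P_T(f(w))`). Then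
`P_T(u) = P_T(w)` implies `P_T(f(u)) = P_T(f(w))`: `f` maps each constant-time
hyperplane into a constant-time hyperplane. -/
theorem stmt3
    (f : (ℝ × EuclideanSpace ℝ (Fin 3)) ≃ₜ (ℝ × EuclideanSpace ℝ (Fin 3)))
    (hf : ∀ u w : ℝ × EuclideanSpace ℝ (Fin 3), u.1 < w.1 → (f u).1 < (f w).1) :
    ∀ u w : ℝ × EuclideanSpace ℝ (Fin 3), u.1 = w.1 → (f u).1 = (f w).1 :=
  fun _ _ h => fst_apply_eq_of_fst_eq f.continuous hf h
end

section
/- Every causal homeomorphism f of G = ℝ × ℝ³ is of the form f(t,x) = (f_T(t), f_X(t,x)), where f_T : ℝ → ℝ is a strictly (monotonically) increasing homeomorphism of ℝ and, for every t ∈ ℝ, the map f_X(t,·) : ℝ³ → ℝ³ is a homeomorphism of ℝ³. -/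
/-!
Letting the time `s` increase to `t`, causality gives `(f (s, x)).1 < (f (t, y)).1` for all
`x, y`, so by continuity `(f (t, x)).1 ≤ (f (t, y)).1`; by symmetry the time of `f (t, x)` is
independent of `x`. It is therefore a strictly increasing function of `t`, onto because `f` is,
hence an order isomorphism of `ℝ`. Each slice `{t} × ℝ³` is then mapped onto the slice at the
new time, and restricting `f` and `f⁻¹` to these slices gives the spatial homeomorphisms.
-/

open Filter Topology Set

noncomputable section

/-- Euclidean 3-space. -/
abbrev E3 : Type := EuclideanSpace ℝ (Fin 3)

/-- The Galilean space-time `G = ℝ × ℝ³`. -/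
abbrev Gal : Type := ℝ × E3

/-- A transformation (homeomorphism) of `G` is causal if it preserves the time
ordering of events: `P_T(u) < P_T(w)` implies `P_T(f(u)) < P_T(f(w))`. -/
def Causal (f : Gal ≃ₜ Gal) : Prop :=
  ∀ u w : Gal, u.1 < w.1 → (f u).1 < (f w).1

section

variable {α β X Y : Type*} [TopologicalSpace X] [TopologicalSpace Y]
  [LinearOrder α] [TopologicalSpace α] [OrderTopology α] [DenselyOrdered α] [NoMinOrder α]
  [LinearOrder β] [TopologicalSpace β] [ClosedIicTopology β]

theorem Continuous.apply_mk_eq_of_fst_lt_imp_lt {g : α × X → β} (hg : Continuous g)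
    (hlt : ∀ u w : α × X, u.1 < w.1 → g u < g w) (t : α) (x y : X) : g (t, x) = g (t, y) := by
  have le_at_same_time (x y : X) : g (t, x) ≤ g (t, y) := by
    have hlim : Tendsto (fun s ↦ g (s, x)) (𝓝[<] t) (𝓝 (g (t, x))) :=
      ((hg.comp (Continuous.prodMk_left x)).tendsto t).mono_left nhdsWithin_le_nhds
    refine le_of_tendsto hlim ?_
    filter_upwards [self_mem_nhdsWithin] with s hs
    exact (hlt (s, x) (t, y) hs).le
  exact (le_at_same_time x y).antisymm (le_at_same_time y x)

theorem Homeomorph.exists_orderIso_fst_apply_eq [Nonempty X] [Nonempty Y] (f : α × X ≃ₜ β × Y)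
    (hf : ∀ u w : α × X, u.1 < w.1 → (f u).1 < (f w).1) :
    ∃ φ : α ≃o β, ∀ p : α × X, (f p).1 = φ p.1 := by
  let x₀ := Classical.arbitrary X
  have fst_eq (p : α × X) : (f p).1 = (f (p.1, x₀)).1 :=
    (continuous_fst.comp f.continuous).apply_mk_eq_of_fst_lt_imp_lt hf p.1 p.2 x₀
  have hmono : StrictMono fun t ↦ (f (t, x₀)).1 := fun a b hab ↦ hf (a, x₀) (b, x₀) hab
  have hsurj : Function.Surjective fun t ↦ (f (t, x₀)).1 := fun s ↦ by
    refine ⟨(f.symm (s, Classical.arbitrary Y)).1, ?_⟩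
    simp only [← fst_eq, Homeomorph.apply_symm_apply]
  exact ⟨hmono.orderIsoOfSurjective _ hsurj, fst_eq⟩

end

section

variable {α β X Y : Type*} [TopologicalSpace α] [TopologicalSpace β] [TopologicalSpace X]
  [TopologicalSpace Y]

theorem Homeomorph.fst_symm_apply_eq {f : α × X ≃ₜ β × Y} {φ : α ≃ β}
    (hφ : ∀ p, (f p).1 = φ p.1) (q : β × Y) : (f.symm q).1 = φ.symm q.1 := by
  rw [Equiv.eq_symm_apply, ← hφ, apply_symm_apply]

def Homeomorph.slice (f : α × X ≃ₜ β × Y) (φ : α ≃ β) (hφ : ∀ p, (f p).1 = φ p.1) (t : α) :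
    X ≃ₜ Y where
  toFun x := (f (t, x)).2
  invFun y := (f.symm (φ t, y)).2
  left_inv x := by
    have : (φ t, (f (t, x)).2) = f (t, x) := Prod.ext (hφ (t, x)).symm rfl
    simp only [this, symm_apply_apply]
  right_inv y := by
    have : (t, (f.symm (φ t, y)).2) = f.symm (φ t, y) :=
      Prod.ext (by rw [fst_symm_apply_eq hφ, Equiv.symm_apply_apply]) rfl
    simp only [this, apply_symm_apply]
  continuous_toFun := by fun_prop
  continuous_invFun := by fun_prop

theorem Homeomorph.apply_eq_slice (f : α × X ≃ₜ β × Y) (φ : α ≃ β) (hφ : ∀ p, (f p).1 = φ p.1)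
    (t : α) (x : X) : f (t, x) = (φ t, f.slice φ hφ t x) :=
  Prod.ext (hφ (t, x)) rfl

end

/-- Every causal homeomorphism `f` of `G = ℝ × ℝ³` is of the form
`f(t,x) = (f_T(t), f_X(t,x))`, where `f_T : ℝ → ℝ` is a strictly (monotonically)
increasing homeomorphism of `ℝ` and, for every `t`, `f_X(t,·) : ℝ³ → ℝ³` is a
homeomorphism of `ℝ³`. -/
theorem stmt5 (f : Gal ≃ₜ Gal) (hf : Causal f) :
    ∃ (fT : ℝ ≃ₜ ℝ) (fX : ℝ → (E3 ≃ₜ E3)), StrictMono fT ∧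
      ∀ (t : ℝ) (x : E3), f (t, x) = (fT t, fX t x) := by
  obtain ⟨φ, hφ⟩ := f.exists_orderIso_fst_apply_eq hf
  exact ⟨φ.toHomeomorph, f.slice φ.toEquiv hφ, φ.strictMono, f.apply_eq_slice φ.toEquiv hφ⟩
end
end

section
/- A homeomorphism f of G = ℝ × ℝ³ is causal if and only if it preserves semitrajectories, i.e. if and only if for every semitrajectory γ (the graph of a continuous curve [t₀, ∞) → ℝ³), the image set f(γ) is again a semitrajectory (the graph of a continuous curve [t₀′, ∞) → ℝ³ for some t₀′). -/
/-!
If `f` is causal, continuity forces events of equal time to have images of equal time, so `f`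
acts on time through an increasing bijection `e` of `ℝ`, and it maps the graph of `γ` over
`[t₀, ∞)` onto the graph over `[e t₀, ∞)` of the transported curve.

Conversely, a semitrajectory meets each time slice at most once, its set of times is an up-set,
and any two events at different times lie on a common one (a segment). Hence `f` separates the
times of events at different times, and the image of the vertical ray from `w` reaches every time
`≥ (f w).1`. If `u` precedes `w` but `(f w).1 ≤ (f u).1`, that ray thus contains an event later
than `u` whose image has the time of `f u`, a contradiction.
-/

open Filter Topology Set

noncomputable section

/-- The semitrajectory in `G` which is the graph of the curve `γ` on `[t₀, ∞)`. -/
def semitraj (t₀ : ℝ) (γ : ℝ → E3) : Set Gal :=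
  (fun t => (t, γ t)) '' Set.Ici t₀

/-- `S ⊆ G` is a semitrajectory: the graph of a continuous curve `γ : [t₀, ∞) → ℝ³`. -/
def IsSemitraj (S : Set Gal) : Prop :=
  ∃ (t₀ : ℝ) (γ : ℝ → E3), ContinuousOn γ (Set.Ici t₀) ∧ S = semitraj t₀ γ

namespace IsSemitraj

variable {S : Set Gal}

theorem injOn_fst (hS : IsSemitraj S) : InjOn Prod.fst S := by
  obtain ⟨t₀, γ, -, rfl⟩ := hS
  rintro _ ⟨s, -, rfl⟩ _ ⟨t, -, rfl⟩ (hst : s = t)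
  rw [hst]

theorem isUpperSet_image_fst (hS : IsSemitraj S) : IsUpperSet (Prod.fst '' S) := by
  obtain ⟨t₀, γ, -, rfl⟩ := hS
  rintro _ c hsc ⟨_, ⟨s, hs, rfl⟩, rfl⟩
  exact ⟨(c, γ c), ⟨c, le_trans hs hsc, rfl⟩, rfl⟩

end IsSemitraj

theorem isSemitraj_semitraj_const (t : ℝ) (x : E3) :
    IsSemitraj (semitraj t fun _ => x) :=
  ⟨t, _, continuousOn_const, rfl⟩

theorem exists_isSemitraj_mem_mem {a b : Gal} (hab : a.1 < b.1) :
    ∃ S, IsSemitraj S ∧ a ∈ S ∧ b ∈ S := by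
  have hne : b.1 - a.1 ≠ 0 := sub_ne_zero.mpr hab.ne'
  let γ : ℝ → E3 := fun t => a.2 + ((t - a.1) / (b.1 - a.1)) • (b.2 - a.2)
  refine ⟨semitraj a.1 γ, ⟨a.1, γ, by fun_prop, rfl⟩, ⟨a.1, self_mem_Ici, ?_⟩, ⟨b.1, hab.le, ?_⟩⟩
  · simp [γ]
  · simp [γ, div_self hne]

theorem image_semitraj_of_fst_eq {f : Gal → Gal} (e : ℝ ≃o ℝ) (he : ∀ u, (f u).1 = e u.1)
    (t₀ : ℝ) (γ : ℝ → E3) :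
    f '' semitraj t₀ γ = semitraj (e t₀) fun s => (f (e.symm s, γ (e.symm s))).2 := by
  have graph : ∀ t, f (t, γ t) = (e t, (f (e.symm (e t), γ (e.symm (e t)))).2) := fun t => by
    rw [e.symm_apply_apply]
    exact Prod.ext (he _) rfl
  rw [semitraj, semitraj, ← e.image_Ici, image_image, image_image]
  exact image_congr fun t _ => graph t

theorem IsSemitraj.image_of_fst_eq {f : Gal → Gal} (hf : Continuous f) (e : ℝ ≃o ℝ)
    (he : ∀ u, (f u).1 = e u.1) {S : Set Gal} (hS : IsSemitraj S) : IsSemitraj (f '' S) := by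
  obtain ⟨t₀, γ, hγ, rfl⟩ := hS
  refine ⟨e t₀, _, ?_, image_semitraj_of_fst_eq e he t₀ γ⟩
  have hmaps : MapsTo e.symm (Ici (e t₀)) (Ici t₀) := fun s hs => e.le_symm_apply.mpr hs
  have he' : Continuous e.symm := e.symm.continuous
  exact continuous_snd.comp_continuousOn (hf.comp_continuousOn
    (he'.continuousOn.prodMk (hγ.comp he'.continuousOn hmaps)))

namespace Causal

variable {f : Gal ≃ₜ Gal}

theorem fst_le_of_fst_eq (hf : Causal f) {u w : Gal} (h : u.1 = w.1) : (f u).1 ≤ (f w).1 := by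
  have hcont : Continuous fun t : ℝ => (f (t, u.2)).1 := by fun_prop
  have hlim : Tendsto (fun t : ℝ => (f (t, u.2)).1) (𝓝[<] u.1) (𝓝 (f u).1) :=
    (hcont.tendsto u.1).mono_left nhdsWithin_le_nhds
  refine le_of_tendsto hlim ?_
  filter_upwards [self_mem_nhdsWithin] with t (ht : t < u.1)
  exact (hf (t, u.2) w (h ▸ ht)).le

theorem exists_orderIso (hf : Causal f) : ∃ e : ℝ ≃o ℝ, ∀ u, (f u).1 = e u.1 := by
  let τ : ℝ → ℝ := fun t => (f (t, 0)).1
  have hτ : ∀ u, (f u).1 = τ u.1 := fun u =>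
    le_antisymm (hf.fst_le_of_fst_eq rfl) (hf.fst_le_of_fst_eq rfl)
  have hsurj : Function.Surjective τ := fun s =>
    ⟨(f.symm (s, 0)).1, by rw [← hτ, f.apply_symm_apply]⟩
  exact ⟨StrictMono.orderIsoOfSurjective τ (fun a b hab => hf (a, 0) (b, 0) hab) hsurj, hτ⟩

end Causal

theorem causal_of_forall_isSemitraj_image {f : Gal ≃ₜ Gal}
    (hf : ∀ S, IsSemitraj S → IsSemitraj (f '' S)) : Causal f := by
  have fst_ne : ∀ a b : Gal, a.1 < b.1 → (f a).1 ≠ (f b).1 := fun a b hab hfab => by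
    obtain ⟨S, hS, ha, hb⟩ := exists_isSemitraj_mem_mem hab
    have := (hf S hS).injOn_fst (mem_image_of_mem f ha) (mem_image_of_mem f hb) hfab
    exact hab.ne (congrArg Prod.fst (f.injective this))
  intro u w huw
  by_contra! hle
  have hray := hf _ (isSemitraj_semitraj_const w.1 w.2)
  have hw : f w ∈ f '' semitraj w.1 fun _ => w.2 := mem_image_of_mem f ⟨w.1, self_mem_Ici, rfl⟩
  obtain ⟨_, ⟨_, ⟨s, hs, rfl⟩, rfl⟩, hfs⟩ :=
    hray.isUpperSet_image_fst hle (mem_image_of_mem Prod.fst hw)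
  exact fst_ne u (s, w.2) (huw.trans_le hs) hfs.symm

/-- A homeomorphism `f` of `G = ℝ × ℝ³` is causal if and only if it
preserves semitrajectories: for every semitrajectory `γ`, the image `f(γ)` is again a
semitrajectory. -/
theorem stmt7 (f : Gal ≃ₜ Gal) :
    Causal f ↔ ∀ S : Set Gal, IsSemitraj S → IsSemitraj (f '' S) := by
  refine ⟨fun hf S hS => ?_, causal_of_forall_isSemitraj_image⟩
  obtain ⟨e, he⟩ := hf.exists_orderIso
  exact hS.image_of_fst_eq f.continuous e he
end
end

section
/- Let f be a causal homeomorphism of G = ℝ × ℝ³ that is asymptotically regular. Then its asymptotic transform f⁺ : ℝ³ → ℝ³ is a continuous function. -/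
open Filter Topology Set

noncomputable section

/-- `S` is an asymptotically regular semitrajectory with asymptotic velocity `v`,
i.e. `S` is the graph of a continuous curve `γ : [t₀, ∞) → ℝ³` with `γ(t)/t → v`. -/
def HasAsympVel (S : Set Gal) (v : E3) : Prop :=
  ∃ (t₀ : ℝ) (γ : ℝ → E3), ContinuousOn γ (Set.Ici t₀) ∧ S = semitraj t₀ γ ∧
    Tendsto (fun t : ℝ => t⁻¹ • γ t) atTop (𝓝 v)

/-- `F` is the asymptotic transform of `f`: for every `v`, every asymptotically regular
semitrajectory `S` with `ω(S) = v` has `ω(f(S)) = F v`.  (In particular the existence of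
such an `F` says exactly that `f` is asymptotically regular at every point.) -/
def IsAsympTransform (f : Gal ≃ₜ Gal) (F : E3 → E3) : Prop :=
  ∀ (v : E3) (S : Set Gal), HasAsympVel S v → HasAsympVel (f '' S) (F v)

/-- `f` is asymptotically regular: at every `v ∈ V` there is a `v′` such that every
asymptotically regular semitrajectory with asymptotic velocity `v` is mapped to one with
asymptotic velocity `v′`. -/
def AsympReg (f : Gal ≃ₜ Gal) : Prop :=
  ∃ F : E3 → E3, IsAsympTransform f F

/-- `f` is an asymptotic homeomorphism: both `f` and `f⁻¹` are asymptotically regular. -/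
def AsympHomeo (f : Gal ≃ₜ Gal) : Prop := AsympReg f ∧ AsympReg f.symm

/-- `f` is an asymptotically identical transformation: a causal asymptotic
homeomorphism with `f⁺ = id`. -/
def AsympIdentical (f : Gal ≃ₜ Gal) : Prop :=
  Causal f ∧ AsympHomeo f ∧ IsAsympTransform f (id : E3 → E3)

/-- `f` is an asymptotically Euclidean transformation: a causal asymptotic
homeomorphism with `f⁺(v) = R v − v₀` for some orthogonal `R` and `v₀ ∈ ℝ³`. -/
def AsympEuclidean (f : Gal ≃ₜ Gal) : Prop :=
  Causal f ∧ AsympHomeo f ∧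
    ∃ (R : E3 ≃ₗᵢ[ℝ] E3) (v₀ : E3), IsAsympTransform f (fun v => R v - v₀)

/-!
The asymptotic velocity of an image semitrajectory can be read off along the original
parametrisation: causality forces the image time `(f (t, γ t)).1` to tend to infinity, so
`ω(f(γ)) = lim (f (t, γ t)).2 / (f (t, γ t)).1`. Given `uₙ → v`, choose for each `n` a time
`aₙ` at which this ratio along the line `t ↦ t uₙ` is within `1/(n+1)` of `F uₙ`, with
`aₙ → ∞`. A curve `t ↦ t w(t)`, where `w` interpolates linearly between the `uₙ` at the
times `aₙ`, has asymptotic velocity `v` and meets the `n`-th line at time `aₙ`; hence the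
ratios along it at the times `aₙ` tend to `F v` and lie within `1/(n+1)` of `F uₙ`.
-/

section Interpolation

variable {E : Type*} [NormedAddCommGroup E] [NormedSpace ℝ E]

def unitRamp (a b t : ℝ) : ℝ :=
  Set.projIcc (0 : ℝ) 1 zero_le_one ((t - a) / (b - a))

theorem continuous_unitRamp (a b : ℝ) : Continuous (unitRamp a b) :=
  continuous_subtype_val.comp <| continuous_projIcc.comp <|
    (continuous_id.sub continuous_const).div_const _

theorem unitRamp_mem_Icc (a b t : ℝ) : unitRamp a b t ∈ Icc (0 : ℝ) 1 :=
  Subtype.property _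

theorem unitRamp_of_le_left {a b t : ℝ} (hab : a ≤ b) (ht : t ≤ a) : unitRamp a b t = 0 := by
  rw [unitRamp, Set.projIcc_of_le_left]
  exact div_nonpos_of_nonpos_of_nonneg (by linarith) (by linarith)

theorem unitRamp_of_right_le {a b t : ℝ} (hab : a < b) (ht : b ≤ t) : unitRamp a b t = 1 := by
  rw [unitRamp, Set.projIcc_of_right_le]
  rw [le_div_iff₀ (by linarith)]
  linarith

/-- For increasing `a`, the sum is finite at every `t`, and on `[a n, a (n + 1)]` it telescopes
to the segment from `c n` to `c (n + 1)`. -/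
def piecewiseLinear (a : ℕ → ℝ) (c : ℕ → E) (t : ℝ) : E :=
  c 0 + ∑' k, unitRamp (a k) (a (k + 1)) t • (c (k + 1) - c k)

variable {a : ℕ → ℝ} {c : ℕ → E}

theorem piecewiseLinear_eq_sum (ha : StrictMono a) {N : ℕ} {t : ℝ} (ht : t ≤ a N) :
    piecewiseLinear a c t =
      c 0 + ∑ k ∈ Finset.range N, unitRamp (a k) (a (k + 1)) t • (c (k + 1) - c k) := by
  rw [piecewiseLinear, tsum_eq_sum]
  intro k hk
  have hNk : a N ≤ a k := ha.monotone (by simpa using hk)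
  rw [unitRamp_of_le_left (ha (Nat.lt_succ_self k)).le (ht.trans hNk), zero_smul]

theorem continuous_piecewiseLinear (ha : StrictMono a) (ha_top : Tendsto a atTop atTop) :
    Continuous (piecewiseLinear a c) := by
  refine continuous_iff_continuousAt.2 fun t => ?_
  obtain ⟨N, hN⟩ := (ha_top.eventually_gt_atTop t).exists
  have hsum : piecewiseLinear a c =ᶠ[𝓝 t] fun s =>
      c 0 + ∑ k ∈ Finset.range N, unitRamp (a k) (a (k + 1)) s • (c (k + 1) - c k) := by
    filter_upwards [Iio_mem_nhds hN] with s hs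
    exact piecewiseLinear_eq_sum ha (le_of_lt hs)
  refine ContinuousAt.congr ?_ hsum.symm
  exact (continuous_const.add <| continuous_finsetSum _ fun k _ =>
    (continuous_unitRamp _ _).smul continuous_const).continuousAt

theorem piecewiseLinear_eq_of_mem_Icc (ha : StrictMono a) {n : ℕ} {t : ℝ}
    (ht : t ∈ Icc (a n) (a (n + 1))) :
    piecewiseLinear a c t = c n + unitRamp (a n) (a (n + 1)) t • (c (n + 1) - c n) := by
  have hfull : ∀ k ∈ Finset.range n, unitRamp (a k) (a (k + 1)) t • (c (k + 1) - c k) =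
      c (k + 1) - c k := fun k hk => by
    rw [unitRamp_of_right_le (ha (Nat.lt_succ_self k))
      ((ha.monotone (Finset.mem_range.1 hk)).trans ht.1), one_smul]
  rw [piecewiseLinear_eq_sum ha ht.2, Finset.sum_range_succ, Finset.sum_congr rfl hfull,
    Finset.sum_range_sub]
  abel

theorem piecewiseLinear_apply_node (ha : StrictMono a) (n : ℕ) :
    piecewiseLinear a c (a n) = c n := by
  rw [piecewiseLinear_eq_of_mem_Icc ha ⟨le_rfl, (ha (Nat.lt_succ_self n)).le⟩,
    unitRamp_of_le_left (ha (Nat.lt_succ_self n)).le le_rfl, zero_smul, add_zero]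

theorem piecewiseLinear_mem_segment (ha : StrictMono a) {n : ℕ} {t : ℝ}
    (ht : t ∈ Icc (a n) (a (n + 1))) :
    piecewiseLinear a c t ∈ segment ℝ (c n) (c (n + 1)) := by
  rw [segment_eq_image', piecewiseLinear_eq_of_mem_Icc ha ht]
  exact ⟨_, unitRamp_mem_Icc _ _ _, rfl⟩

theorem StrictMono.exists_mem_Icc_of_le (ha : StrictMono a) (ha_top : Tendsto a atTop atTop)
    {K : ℕ} {t : ℝ} (ht : a K ≤ t) : ∃ n ≥ K, t ∈ Icc (a n) (a (n + 1)) := by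
  classical
  have hex : ∃ n, t < a (n + 1) := (ha_top.eventually_gt_atTop t).exists_forall_of_atTop.imp
    fun _ h => h _ (Nat.le_succ _)
  refine ⟨Nat.find hex, ?_, ?_, (Nat.find_spec hex).le⟩
  · exact Nat.lt_succ_iff.1 (ha.lt_iff_lt.1 (ht.trans_lt (Nat.find_spec hex)))
  · rcases hfind : Nat.find hex with _ | m
    · exact (ha.monotone (Nat.zero_le K)).trans ht
    · exact not_lt.1 (Nat.find_min hex (hfind ▸ Nat.lt_succ_self m))

theorem tendsto_piecewiseLinear (ha : StrictMono a) (ha_top : Tendsto a atTop atTop) {v : E}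
    (hc : Tendsto c atTop (𝓝 v)) : Tendsto (piecewiseLinear a c) atTop (𝓝 v) := by
  refine Metric.nhds_basis_ball.tendsto_right_iff.2 fun ε hε => ?_
  obtain ⟨K, hK⟩ := eventually_atTop.1 (hc.eventually (Metric.ball_mem_nhds v hε))
  filter_upwards [eventually_ge_atTop (a K)] with t ht
  obtain ⟨n, hn, htn⟩ := ha.exists_mem_Icc_of_le ha_top ht
  exact (convex_ball v ε).segment_subset (hK n hn) (hK (n + 1) (by omega))
    (piecewiseLinear_mem_segment ha htn)

theorem exists_continuous_interpolation_tendsto {P : ℕ → ℝ → Prop}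
    (hP : ∀ n, ∀ᶠ t in atTop, P n t) {v : E} (hc : Tendsto c atTop (𝓝 v)) :
    ∃ (a : ℕ → ℝ) (w : ℝ → E), (∀ n, P n (a n)) ∧ Tendsto a atTop atTop ∧ Continuous w ∧
      (∀ n, w (a n) = c n) ∧ Tendsto w atTop (𝓝 v) := by
  choose T hT using fun n => eventually_atTop.1 (hP n)
  set a : ℕ → ℝ := fun n => n + ∑ i ∈ Finset.range (n + 1), |T i|
  have ha : StrictMono a := strictMono_nat_of_lt_succ fun n => by
    simp only [a, Finset.sum_range_succ _ (n + 1)]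
    push_cast
    linarith [abs_nonneg (T (n + 1))]
  have ha_top : Tendsto a atTop atTop :=
    tendsto_atTop_mono (fun n => le_add_of_nonneg_right (Finset.sum_nonneg fun i _ =>
      abs_nonneg (T i))) tendsto_natCast_atTop_atTop
  refine ⟨a, piecewiseLinear a c, fun n => hT n _ ?_, ha_top,
    continuous_piecewiseLinear ha ha_top, piecewiseLinear_apply_node ha,
    tendsto_piecewiseLinear ha ha_top hc⟩
  calc T n ≤ |T n| := le_abs_self _
    _ ≤ ∑ i ∈ Finset.range (n + 1), |T i| :=
      Finset.single_le_sum (fun i _ => abs_nonneg (T i)) (Finset.self_mem_range_succ n)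
    _ ≤ a n := le_add_of_nonneg_left n.cast_nonneg

end Interpolation

def meanVelocity (p : Gal) : E3 := p.1⁻¹ • p.2

theorem hasAsympVel_semitraj_smul {t₀ : ℝ} {w : ℝ → E3} (hw : ContinuousOn w (Ici t₀))
    {v : E3} (hwv : Tendsto w atTop (𝓝 v)) :
    HasAsympVel (semitraj t₀ fun t => t • w t) v := by
  refine ⟨t₀, _, continuousOn_id.smul hw, rfl, hwv.congr' ?_⟩
  filter_upwards [eventually_ne_atTop 0] with t ht
  change w t = t⁻¹ • t • w t
  rw [smul_smul, inv_mul_cancel₀ ht, one_smul]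

section Causal

variable {f : Gal ≃ₜ Gal} {t₀ s₀ : ℝ} {γ δ : ℝ → E3}

theorem Causal.tendsto_fst_of_image_semitraj (hf : Causal f)
    (himg : f '' semitraj t₀ γ = semitraj s₀ δ) :
    Tendsto (fun t => (f (t, γ t)).1) atTop atTop := by
  refine tendsto_atTop_atTop.2 fun b => ?_
  have hmem : (max b s₀, δ (max b s₀)) ∈ f '' semitraj t₀ γ :=
    himg ▸ ⟨max b s₀, mem_Ici.2 (le_max_right _ _), rfl⟩
  obtain ⟨_, ⟨t', -, rfl⟩, hft'⟩ := hmem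
  refine ⟨t' + 1, fun t ht => ?_⟩
  have hlt : (f (t', γ t')).1 < (f (t, γ t)).1 := hf _ _ (by dsimp; linarith)
  rw [hft'] at hlt
  exact (le_max_left b s₀).trans hlt.le

theorem snd_eq_of_image_semitraj (himg : f '' semitraj t₀ γ = semitraj s₀ δ) {t : ℝ}
    (ht : t₀ ≤ t) : (f (t, γ t)).2 = δ (f (t, γ t)).1 := by
  obtain ⟨s, -, hs⟩ : f (t, γ t) ∈ semitraj s₀ δ := himg ▸ ⟨_, ⟨t, ht, rfl⟩, rfl⟩
  rw [← hs]

theorem Causal.tendsto_meanVelocity_of_hasAsympVel_image (hf : Causal f) {v : E3}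
    (h : HasAsympVel (f '' semitraj t₀ γ) v) :
    Tendsto (fun t => meanVelocity (f (t, γ t))) atTop (𝓝 v) := by
  obtain ⟨s₀, δ, -, himg, hδ⟩ := h
  refine (hδ.comp (hf.tendsto_fst_of_image_semitraj himg)).congr' ?_
  filter_upwards [eventually_ge_atTop t₀] with t ht
  simp only [Function.comp_apply, meanVelocity, snd_eq_of_image_semitraj himg ht]

end Causal

/-- Let `f` be a causal homeomorphism of `G = ℝ × ℝ³` that is
asymptotically regular, with asymptotic transform `F = f⁺`.  Then `f⁺` is continuous. -/
theorem stmt8 (f : Gal ≃ₜ Gal) (hf : Causal f) (F : E3 → E3)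
    (hF : IsAsympTransform f F) : Continuous F := by
  refine continuous_iff_seqContinuous.2 fun u v hu => ?_
  have hline : ∀ n : ℕ, ∀ᶠ t in atTop,
      dist (meanVelocity (f (t, t • u n))) (F (u n)) < 1 / ((n : ℝ) + 1) := fun n =>
    (hf.tendsto_meanVelocity_of_hasAsympVel_image (hF _ _ (hasAsympVel_semitraj_smul
      (t₀ := 0) continuousOn_const tendsto_const_nhds))).eventually
      (Metric.ball_mem_nhds _ Nat.one_div_pos_of_nat)
  obtain ⟨a, w, hclose, ha_top, hw, hwa, hwv⟩ := exists_continuous_interpolation_tendsto hline hu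
  have hcurve := hf.tendsto_meanVelocity_of_hasAsympVel_image
    (hF _ _ (hasAsympVel_semitraj_smul (t₀ := 0) hw.continuousOn hwv))
  refine tendsto_of_tendsto_of_dist (hcurve.comp ha_top) <|
    squeeze_zero (fun _ => dist_nonneg) (fun n => ?_) tendsto_one_div_add_atTop_nhds_zero_nat
  simpa only [Function.comp_apply, hwa] using (hclose n).le
end
end

section
/- Let f be a causal homeomorphism of G = ℝ × ℝ³ that is an asymptotic homeomorphism, i.e. both f and f⁻¹ are asymptotically regular. Then the asymptotic transform f⁺ is a homeomorphism of ℝ³ and (f⁻¹)⁺ = (f⁺)⁻¹. -/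
/-! Applying `f` and then `f⁻¹` to the line `t ↦ t • v` gives back the line, and asymptotic
velocities are unique, so `F' ∘ F = id = F ∘ F'`.

For continuity, causality makes the time of `f (t, x)` independent of `x`, so the velocity of the
image of a curve `γ` is the limit of `(f (t, γ t)).2 / (f (t, 0)).1`. Given `x n → v`, the lines of
velocities `x n` can be glued, at increasingly late times `t n`, into one continuous curve
`s ↦ s • u s` of velocity `v`; evaluating the image at the times `t n` gives `F (x n) → F v`. -/

open Filter Topology Set

noncomputable section

section KnotInterpolation

variable {E : Type*} [NormedAddCommGroup E] [NormedSpace ℝ E]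

/-- Moves linearly from `x n` to `x (n + 1)` on `[t n, t n + 1]` and stays at `x (n + 1)` until
the next knot `t (n + 1)`, provided `t n + 1 ≤ t (n + 1)`. -/
def knotInterpolation (t : ℕ → ℝ) (x : ℕ → E) (s : ℝ) : E :=
  x 0 + ∑' n, (projIcc (0 : ℝ) 1 zero_le_one (s - t n) : ℝ) • (x (n + 1) - x n)

lemma tendsto_inv_smul_smul {u : ℝ → E} {v : E} (hu : Tendsto u atTop (𝓝 v)) :
    Tendsto (fun t : ℝ => t⁻¹ • (t • u t)) atTop (𝓝 v) := by
  refine hu.congr' ?_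
  filter_upwards [eventually_gt_atTop (0 : ℝ)] with t ht
  rw [inv_smul_smul₀ ht.ne']

variable {t : ℕ → ℝ} {x : ℕ → E}

lemma strictMono_of_add_one_le (ht : ∀ n, t n + 1 ≤ t (n + 1)) : StrictMono t :=
  strictMono_nat_of_lt_succ fun n => by linarith [ht n]

lemma knotInterpolation_eq_sum (ht : Monotone t) {s : ℝ} {N : ℕ} (hs : s ≤ t N) :
    knotInterpolation t x s =
      x 0 + ∑ n ∈ Finset.range N,
        (projIcc (0 : ℝ) 1 zero_le_one (s - t n) : ℝ) • (x (n + 1) - x n) := by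
  rw [knotInterpolation, tsum_eq_sum]
  intro n hn
  have hsn : s - t n ≤ 0 := by linarith [ht (not_lt.mp (Finset.mem_range.not.mp hn))]
  rw [projIcc_of_le_left _ hsn, zero_smul]

lemma knotInterpolation_eq_of_mem_Icc (ht : ∀ n, t n + 1 ≤ t (n + 1)) {s : ℝ} {m : ℕ}
    (hs : s ∈ Icc (t m) (t (m + 1))) :
    knotInterpolation t x s =
      x m + (projIcc (0 : ℝ) 1 zero_le_one (s - t m) : ℝ) • (x (m + 1) - x m) := by
  have hmono := strictMono_of_add_one_le ht
  rw [knotInterpolation_eq_sum hmono.monotone hs.2, Finset.sum_range_succ]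
  have hfull : ∀ n ∈ Finset.range m,
      (projIcc (0 : ℝ) 1 zero_le_one (s - t n) : ℝ) • (x (n + 1) - x n) = x (n + 1) - x n := by
    intro n hn
    have : 1 ≤ s - t n := by
      linarith [ht n, hmono.monotone (Finset.mem_range.mp hn : n < m), hs.1]
    rw [projIcc_of_right_le _ this, one_smul]
  rw [Finset.sum_congr rfl hfull, Finset.sum_range_sub]
  abel

lemma knotInterpolation_apply_knot (ht : ∀ n, t n + 1 ≤ t (n + 1)) (m : ℕ) :
    knotInterpolation t x (t m) = x m := by
  rw [knotInterpolation_eq_of_mem_Icc ht ⟨le_rfl, by linarith [ht m]⟩, sub_self,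
    projIcc_left, zero_smul, add_zero]

lemma tendsto_atTop_of_add_one_le (ht : ∀ n, t n + 1 ≤ t (n + 1)) : Tendsto t atTop atTop := by
  have hlin : ∀ n : ℕ, t 0 + n ≤ t n := by
    intro n
    induction n with
    | zero => simp
    | succ k ih => push_cast; linarith [ht k]
  exact tendsto_atTop_mono hlin (tendsto_atTop_add_const_left _ _ tendsto_natCast_atTop_atTop)

lemma continuous_knotInterpolation (ht : Monotone t) (htop : Tendsto t atTop atTop) :
    Continuous (knotInterpolation t x) := by
  refine continuous_iff_continuousAt.mpr fun s => ?_
  obtain ⟨N, hN⟩ := (htop.eventually_gt_atTop s).exists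
  have hsum : Continuous fun r : ℝ =>
      x 0 + ∑ n ∈ Finset.range N,
        (projIcc (0 : ℝ) 1 zero_le_one (r - t n) : ℝ) • (x (n + 1) - x n) :=
    continuous_const.add <| continuous_finsetSum _ fun n _ =>
      (continuous_subtype_val.comp <| continuous_projIcc.comp <|
        continuous_id.sub continuous_const).smul continuous_const
  refine hsum.continuousAt.congr (eventuallyEq_of_mem (Iio_mem_nhds hN) fun r hr => ?_)
  exact (knotInterpolation_eq_sum ht (le_of_lt hr)).symm

lemma exists_mem_Ico_knots (htop : Tendsto t atTop atTop) {s : ℝ} (hs : t 0 ≤ s) :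
    ∃ m, t m ≤ s ∧ s < t (m + 1) := by
  classical
  have hex : ∃ n, s < t n := (htop.eventually_gt_atTop s).exists
  obtain ⟨m, hm⟩ := Nat.exists_eq_succ_of_ne_zero fun h0 : Nat.find hex = 0 =>
    (Nat.find_spec hex).not_ge (h0 ▸ hs)
  refine ⟨m, not_lt.mp (Nat.find_min hex (hm ▸ Nat.lt_succ_self m)), ?_⟩
  rw [← Nat.succ_eq_add_one, ← hm]
  exact Nat.find_spec hex

lemma tendsto_knotInterpolation (ht : ∀ n, t n + 1 ≤ t (n + 1)) {v : E}
    (hx : Tendsto x atTop (𝓝 v)) : Tendsto (knotInterpolation t x) atTop (𝓝 v) := by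
  have hmono := strictMono_of_add_one_le ht
  have htop := tendsto_atTop_of_add_one_le ht
  refine Metric.tendsto_atTop.mpr fun ε hε => ?_
  obtain ⟨N, hN⟩ := Metric.tendsto_atTop.mp hx ε hε
  refine ⟨t N, fun s hs => ?_⟩
  obtain ⟨m, hm, hsm⟩ := exists_mem_Ico_knots htop ((hmono.monotone (Nat.zero_le N)).trans hs)
  have hNm : N ≤ m := Nat.lt_succ_iff.mp (hmono.lt_iff_lt.mp (hs.trans_lt hsm))
  rw [← Metric.mem_ball, knotInterpolation_eq_of_mem_Icc ht ⟨hm, hsm.le⟩]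
  exact (convex_ball v ε).add_smul_sub_mem (hN m hNm) (hN (m + 1) (by omega))
    (projIcc (0 : ℝ) 1 zero_le_one (s - t m)).2

lemma exists_continuous_tendsto_interpolating {v : E} (hx : Tendsto x atTop (𝓝 v))
    (T : ℕ → ℝ) : ∃ (t : ℕ → ℝ) (u : ℝ → E), (∀ n, T n ≤ t n) ∧ Tendsto t atTop atTop ∧
      Continuous u ∧ (∀ n, u (t n) = x n) ∧ Tendsto u atTop (𝓝 v) := by
  set t : ℕ → ℝ := fun n => n + ∑ k ∈ Finset.range (n + 1), |T k|
  have ht : ∀ n, t n + 1 ≤ t (n + 1) := fun n => by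
    simp only [t, Finset.sum_range_succ _ (n + 1)]
    push_cast
    linarith [abs_nonneg (T (n + 1))]
  have hTt : ∀ n, T n ≤ t n := fun n => by
    have := Finset.single_le_sum (fun k _ => abs_nonneg (T k)) (Finset.self_mem_range_succ n)
    simp only [t]
    linarith [le_abs_self (T n), (Nat.cast_nonneg n : (0 : ℝ) ≤ n)]
  have htop := tendsto_atTop_of_add_one_le ht
  refine ⟨t, knotInterpolation t x, hTt, htop, ?_, knotInterpolation_apply_knot ht,
    tendsto_knotInterpolation ht hx⟩
  exact continuous_knotInterpolation (strictMono_of_add_one_le ht).monotone htop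

end KnotInterpolation

lemma mem_semitraj {t₀ : ℝ} {γ : ℝ → E3} {p : Gal} :
    p ∈ semitraj t₀ γ ↔ t₀ ≤ p.1 ∧ p.2 = γ p.1 := by
  constructor
  · rintro ⟨t, ht, rfl⟩
    exact ⟨ht, rfl⟩
  · rintro ⟨ht, hp⟩
    exact ⟨p.1, ht, Prod.ext rfl hp.symm⟩

lemma HasAsympVel.unique {S : Set Gal} {v w : E3} (hv : HasAsympVel S v) (hw : HasAsympVel S w) :
    v = w := by
  obtain ⟨t₀, γ, -, rfl, hγ⟩ := hv
  obtain ⟨t₁, δ, -, hS, hδ⟩ := hw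
  refine tendsto_nhds_unique hγ (hδ.congr' ?_)
  filter_upwards [eventually_ge_atTop (max t₀ t₁)] with t ht
  have hmem : ((t, γ t) : Gal) ∈ semitraj t₁ δ := hS ▸ ⟨t, le_of_max_le_left ht, rfl⟩
  rw [show γ t = δ t from (mem_semitraj.mp hmem).2]

lemma hasAsympVel_line (v : E3) : HasAsympVel (semitraj 1 fun t => t • v) v :=
  ⟨1, _, (continuous_id.smul continuous_const).continuousOn, rfl,
    tendsto_inv_smul_smul tendsto_const_nhds⟩

lemma IsAsympTransform.leftInverse {f : Gal ≃ₜ Gal} {F F' : E3 → E3}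
    (hF : IsAsympTransform f F) (hF' : IsAsympTransform f.symm F') :
    Function.LeftInverse F' F := fun v => by
  have h := hF' _ _ (hF v _ (hasAsympVel_line v))
  simp only [image_image, Homeomorph.symm_apply_apply, image_id'] at h
  exact h.unique (hasAsympVel_line v)

namespace Causal

variable {f : Gal ≃ₜ Gal}

-- The preimage of the open slab of times between `(f u).1` and `(f w).1` would be an open set
-- lying in the single time slice `{p | p.1 = u.1}`.
lemma not_fst_lt_of_fst_eq (hf : Causal f) {u w : Gal} (huw : u.1 = w.1) :
    ¬ (f u).1 < (f w).1 := by
  intro hlt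
  set V : Set Gal := f ⁻¹' (Ioo (f u).1 (f w).1 ×ˢ univ)
  have hopen : IsOpen (Prod.fst '' V) :=
    isOpenMap_fst _ ((isOpen_Ioo.prod isOpen_univ).preimage f.continuous)
  obtain ⟨m, hm⟩ := exists_between hlt
  have hne : (Prod.fst '' V).Nonempty :=
    ⟨_, mem_image_of_mem _ (show f.symm (m, 0) ∈ V by simpa [V] using hm)⟩
  have hslice : Prod.fst '' V ⊆ {u.1} := by
    rintro _ ⟨p, ⟨⟨hp₁, hp₂⟩, -⟩, rfl⟩
    rcases lt_trichotomy p.1 u.1 with h | h | h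
    · exact absurd (hf p u h) hp₁.not_gt
    · exact h
    · exact absurd (hf w p (huw ▸ h)) hp₂.not_gt
  exact not_isOpen_singleton u.1 (hne.subset_singleton_iff.mp hslice ▸ hopen)

lemma fst_eq (hf : Causal f) {u w : Gal} (huw : u.1 = w.1) : (f u).1 = (f w).1 :=
  le_antisymm (not_lt.mp (hf.not_fst_lt_of_fst_eq huw.symm))
    (not_lt.mp (hf.not_fst_lt_of_fst_eq huw))

lemma fst_lt_iff (hf : Causal f) {u w : Gal} : (f u).1 < (f w).1 ↔ u.1 < w.1 := by
  refine ⟨fun h => ?_, hf u w⟩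
  rcases lt_trichotomy u.1 w.1 with hlt | heq | hgt
  · exact hlt
  · exact absurd (hf.fst_eq heq) h.ne
  · exact absurd (hf w u hgt) h.not_gt

protected lemma symm (hf : Causal f) : Causal f.symm := fun u w h => by
  rwa [← hf.fst_lt_iff, Homeomorph.apply_symm_apply, Homeomorph.apply_symm_apply]

lemma tendsto_fst_atTop (hf : Causal f) : Tendsto (fun t : ℝ => (f (t, 0)).1) atTop atTop := by
  refine tendsto_atTop_atTop_of_monotone (fun s t hst => ?_) fun b => ⟨(f.symm (b, 0)).1, ?_⟩
  · rcases hst.eq_or_lt with rfl | h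
    · exact le_rfl
    · exact (hf _ _ h).le
  · rw [hf.fst_eq (u := ((f.symm (b, 0)).1, 0)) (w := f.symm (b, 0)) rfl,
      Homeomorph.apply_symm_apply]

lemma tendsto_of_isAsympTransform (hf : Causal f) {F : E3 → E3} (hF : IsAsympTransform f F)
    {t₀ : ℝ} {γ : ℝ → E3} {v : E3} (hγ : ContinuousOn γ (Ici t₀))
    (hv : Tendsto (fun t : ℝ => t⁻¹ • γ t) atTop (𝓝 v)) :
    Tendsto (fun t : ℝ => (f (t, 0)).1⁻¹ • (f (t, γ t)).2) atTop (𝓝 (F v)) := by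
  obtain ⟨s₀, δ, -, himage, hδ⟩ := hF v _ ⟨t₀, γ, hγ, rfl, hv⟩
  refine (hδ.comp hf.tendsto_fst_atTop).congr' ?_
  filter_upwards [eventually_ge_atTop t₀] with t ht
  have hmem : f (t, γ t) ∈ semitraj s₀ δ := himage ▸ mem_image_of_mem f ⟨t, ht, rfl⟩
  rw [Function.comp_apply, (mem_semitraj.mp hmem).2, hf.fst_eq (u := (t, γ t)) (w := (t, 0)) rfl]

lemma continuous_of_isAsympTransform (hf : Causal f) {F : E3 → E3}
    (hF : IsAsympTransform f F) : Continuous F := by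
  refine continuous_iff_seqContinuous.mpr fun x v hx => ?_
  have hline : ∀ n : ℕ, ∃ T : ℝ, ∀ t ≥ T,
      dist ((f (t, 0)).1⁻¹ • (f (t, t • x n)).2) (F (x n)) < 1 / (n + 1) := fun n =>
    Metric.tendsto_atTop.mp (hf.tendsto_of_isAsympTransform hF (t₀ := 0)
      (continuous_id.smul continuous_const).continuousOn
      (tendsto_inv_smul_smul tendsto_const_nhds)) _ Nat.one_div_pos_of_nat
  choose T hT using hline
  obtain ⟨t, u, hTt, htop, hu, hut, huv⟩ := exists_continuous_tendsto_interpolating hx T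
  have hglued := (hf.tendsto_of_isAsympTransform hF (t₀ := 0) (γ := fun s => s • u s)
    (continuous_id.smul hu).continuousOn (tendsto_inv_smul_smul huv)).comp htop
  refine hglued.congr_dist (squeeze_zero (fun _ => dist_nonneg) (fun n => ?_)
    tendsto_one_div_add_atTop_nhds_zero_nat)
  simpa only [Function.comp_apply, hut] using (hT n (t n) (hTt n)).le

end Causal

/-- Let `f` be a causal homeomorphism of `G = ℝ × ℝ³` that is an
asymptotic homeomorphism: `f` is asymptotically regular with asymptotic transform `F = f⁺`
and `f⁻¹` is asymptotically regular with asymptotic transform `F′ = (f⁻¹)⁺`.  Then `f⁺` is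
a homeomorphism of `ℝ³` and `(f⁻¹)⁺ = (f⁺)⁻¹`: both `F` and `F′` are continuous and `F′`
is the two-sided inverse of `F`. -/
theorem stmt9 (f : Gal ≃ₜ Gal) (hf : Causal f) (F F' : E3 → E3)
    (hF : IsAsympTransform f F) (hF' : IsAsympTransform f.symm F') :
    Continuous F ∧ Continuous F' ∧
      Function.LeftInverse F' F ∧ Function.RightInverse F' F :=
  ⟨hf.continuous_of_isAsympTransform hF, hf.symm.continuous_of_isAsympTransform hF',
    hF.leftInverse hF', hF'.leftInverse (f.symm_symm ▸ hF)⟩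
end
end

section
/- Let γ₁ and γ₂ be two asymptotically regular semitrajectories in G = ℝ × ℝ³. Then the following are equivalent: (i) ω(γ₁) = ω(γ₂); (ii) there exists an asymptotically identical transformation f of G such that γ₂ = f(γ₁) (as subsets of G). -/
open Filter Topology Set

noncomputable section

lemma semitraj_congr {t₀ : ℝ} {γ δ : ℝ → E3} (h : EqOn γ δ (Ici t₀)) :
    semitraj t₀ γ = semitraj t₀ δ :=
  image_congr fun t ht => by rw [h ht]

lemma HasAsympVel.exists_continuous {S : Set Gal} {v : E3} (h : HasAsympVel S v) :
    ∃ (t₀ : ℝ) (γ : ℝ → E3), Continuous γ ∧ S = semitraj t₀ γ ∧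
      Tendsto (fun t : ℝ => t⁻¹ • γ t) atTop (𝓝 v) := by
  obtain ⟨t₀, γ, hγc, rfl, hγ⟩ := h
  have hEq : EqOn γ (fun t => γ (max t t₀)) (Ici t₀) := fun t ht =>
    congrArg γ (max_eq_left (mem_Ici.mp ht)).symm
  refine ⟨t₀, fun t => γ (max t t₀), ?_, semitraj_congr hEq, hγ.congr' ?_⟩
  · exact hγc.comp_continuous (continuous_id.max continuous_const) fun t => le_max_right t t₀
  · filter_upwards [eventually_ge_atTop t₀] with t ht
    rw [hEq ht]

lemma tendsto_inv_smul_comp_sub_const {E : Type*} [NormedAddCommGroup E] [NormedSpace ℝ E]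
    {δ : ℝ → E} {v : E} (c : ℝ) (h : Tendsto (fun t : ℝ => t⁻¹ • δ t) atTop (𝓝 v)) :
    Tendsto (fun t : ℝ => t⁻¹ • δ (t - c)) atTop (𝓝 v) := by
  have hshift : Tendsto (fun t : ℝ => (t - c)⁻¹ • δ (t - c)) atTop (𝓝 v) :=
    h.comp (tendsto_atTop_add_const_right atTop (-c) tendsto_id)
  have hratio : Tendsto (fun t : ℝ => 1 - c * t⁻¹) atTop (𝓝 1) := by
    simpa using tendsto_const_nhds.sub (tendsto_inv_atTop_zero.const_mul c)
  refine (one_smul ℝ v ▸ hratio.smul hshift).congr' ?_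
  filter_upwards [eventually_gt_atTop (max c 0)] with t ht
  have ht0 : t ≠ 0 := (lt_of_le_of_lt (le_max_right c 0) ht).ne'
  have htc : t - c ≠ 0 := sub_ne_zero.mpr (lt_of_le_of_lt (le_max_left c 0) ht).ne'
  rw [smul_smul, show 1 - c * t⁻¹ = t⁻¹ * (t - c) by field_simp, mul_assoc,
    mul_inv_cancel₀ htc, mul_one]

def shear (c : ℝ) (g : ℝ → E3) (hg : Continuous g) : Gal ≃ₜ Gal where
  toFun p := (p.1 + c, p.2 + g p.1)
  invFun p := (p.1 - c, p.2 - g (p.1 - c))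
  left_inv p := by simp
  right_inv p := by simp
  continuous_toFun := by fun_prop
  continuous_invFun := by fun_prop

section Shear

variable {c : ℝ} {g : ℝ → E3} {hg : Continuous g}

@[simp]
lemma shear_apply (p : Gal) : shear c g hg p = (p.1 + c, p.2 + g p.1) := rfl

lemma shear_symm :
    (shear c g hg).symm = shear (-c) (fun t => -g (t - c)) (by fun_prop) :=
  Homeomorph.ext fun p => Prod.ext (sub_eq_add_neg p.1 c) (sub_eq_add_neg _ _)

lemma causal_shear : Causal (shear c g hg) := fun _ _ h => by simpa using h

lemma image_shear_semitraj (t₀ : ℝ) (δ : ℝ → E3) :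
    shear c g hg '' semitraj t₀ δ = semitraj (t₀ + c) (fun t => δ (t - c) + g (t - c)) := by
  ext p
  rw [← (shear c g hg).preimage_symm, mem_preimage, mem_semitraj, mem_semitraj]
  change t₀ ≤ p.1 - c ∧ p.2 - g (p.1 - c) = δ (p.1 - c) ↔ _
  rw [le_sub_iff_add_le, sub_eq_iff_eq_add]

lemma isAsympTransform_shear_id (h0 : Tendsto (fun t : ℝ => t⁻¹ • g t) atTop (𝓝 0)) :
    IsAsympTransform (shear c g hg) id := by
  rintro v S ⟨t₀, δ, hδc, rfl, hδ⟩
  refine ⟨t₀ + c, fun t => δ (t - c) + g (t - c), ?_, image_shear_semitraj t₀ δ, ?_⟩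
  · refine (hδc.comp (continuous_sub_right c).continuousOn fun t ht => ?_).add (by fun_prop)
    exact mem_Ici.mpr (le_sub_iff_add_le.mpr ht)
  · have hsum : Tendsto (fun t : ℝ => t⁻¹ • (δ t + g t)) atTop (𝓝 v) := by
      simpa only [smul_add, add_zero] using hδ.add h0
    exact tendsto_inv_smul_comp_sub_const c hsum

lemma asympIdentical_shear (h0 : Tendsto (fun t : ℝ => t⁻¹ • g t) atTop (𝓝 0)) :
    AsympIdentical (shear c g hg) := by
  have hT : IsAsympTransform (shear c g hg) id := isAsympTransform_shear_id h0
  have h0' : Tendsto (fun t : ℝ => t⁻¹ • -g (t - c)) atTop (𝓝 0) := by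
    simpa using (tendsto_inv_smul_comp_sub_const c h0).neg
  refine ⟨causal_shear, ⟨⟨id, hT⟩, id, ?_⟩, hT⟩
  rw [shear_symm]
  exact isAsympTransform_shear_id h0'

end Shear

/-- Let `γ₁` and `γ₂` be two asymptotically regular semitrajectories in
`G = ℝ × ℝ³`, with asymptotic velocities `v₁` and `v₂`.  Then `ω(γ₁) = ω(γ₂)` if and only
if there exists an asymptotically identical transformation `f` of `G` with `γ₂ = f(γ₁)`
(as subsets of `G`). -/
theorem stmt16 (S₁ S₂ : Set Gal) (v₁ v₂ : E3)
    (h₁ : HasAsympVel S₁ v₁) (h₂ : HasAsympVel S₂ v₂) :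
    v₁ = v₂ ↔ ∃ f : Gal ≃ₜ Gal, AsympIdentical f ∧ S₂ = f '' S₁ := by
  refine ⟨fun hv => ?_, fun ⟨f, ⟨_, _, hid⟩, hS⟩ => (hid v₁ S₁ h₁).unique (hS ▸ h₂)⟩
  obtain ⟨t₁, γ₁, hγ₁c, rfl, hγ₁⟩ := h₁.exists_continuous
  obtain ⟨t₂, γ₂, hγ₂c, rfl, hγ₂⟩ := h₂.exists_continuous
  set c := t₂ - t₁
  have hg : Continuous fun t => γ₂ (t + c) - γ₁ t := by fun_prop
  have h0 : Tendsto (fun t : ℝ => t⁻¹ • (γ₂ (t + c) - γ₁ t)) atTop (𝓝 0) := by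
    simpa [hv, smul_sub] using (tendsto_inv_smul_comp_sub_const (-c) hγ₂).sub hγ₁
  refine ⟨shear c _ hg, asympIdentical_shear h0, ?_⟩
  rw [image_shear_semitraj, show t₁ + c = t₂ by ring]
  exact semitraj_congr fun t _ => by simp
end
end
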